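/- arXiv:1108.1891 — 6 statements merged into one kernel-verified Lean document; each statement's English description precedes it below -/
import Mathlib

section
/- For every real number α with 0 < α ≤ 1/2 and every s ∈ ℝ, the integral ∫_0^1 |t + s|^{2α−1} dt satisfies ∫_0^1 |t + s|^{2α−1} dt ≤ 1/(α·2^{2α}). -/
/-!
After the substitution `u = t + s` the claim bounds `∫ |u|^p` over an interval `[a, a + 1]`,
with `p = 2α - 1 ∈ (-1, 0]`. If the interval lies on one side of `0`, the integral is
`((x + 1)^(p+1) - x^(p+1)) / (p+1)` with `x` the distance from `0` to the interval, hence at most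
`1 / (p+1)` by subadditivity of `x ↦ x^(p+1)`. If it straddles `0`, the integral is
`((-a)^(p+1) + (a+1)^(p+1)) / (p+1)`, which by concavity is at most its value
`2 (1/2)^(p+1) / (p+1) = 1 / (α 2^(2α))` at the symmetric interval `a = -1/2`.
-/

open MeasureTheory intervalIntegral Set

namespace Real

lemma rpow_add_rpow_le_two_mul_rpow_half {q x y : ℝ} (hq₀ : 0 ≤ q) (hq₁ : q ≤ 1)
    (hx : 0 ≤ x) (hy : 0 ≤ y) : x ^ q + y ^ q ≤ 2 * ((x + y) / 2) ^ q := by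
  have h := (concaveOn_rpow hq₀ hq₁).2 (mem_Ici.2 hx) (mem_Ici.2 hy)
    (by norm_num : (0 : ℝ) ≤ 1 / 2) (by norm_num : (0 : ℝ) ≤ 1 / 2) (add_halves 1)
  simp only [smul_eq_mul] at h
  rw [show 1 / 2 * x + 1 / 2 * y = (x + y) / 2 by ring] at h
  linarith

end Real

variable {p : ℝ}

theorem intervalIntegrable_abs_rpow (hp : -1 < p) (a b : ℝ) :
    IntervalIntegrable (fun u : ℝ => |u| ^ p) volume a b := by
  have of_nonneg : ∀ c : ℝ, 0 ≤ c → IntervalIntegrable (fun u : ℝ => |u| ^ p) volume 0 c := by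
    intro c hc
    refine (intervalIntegrable_rpow' hp).congr fun u hu => ?_
    rw [uIoc_of_le hc] at hu
    simp [abs_of_pos hu.1]
  have from_zero : ∀ c : ℝ, IntervalIntegrable (fun u : ℝ => |u| ^ p) volume 0 c := by
    intro c
    rcases le_total 0 c with hc | hc
    · exact of_nonneg c hc
    · rw [IntervalIntegrable.iff_comp_neg, neg_zero]
      simpa only [abs_neg] using of_nonneg (-c) (neg_nonneg.2 hc)
  exact (from_zero a).symm.trans (from_zero b)

theorem integral_abs_rpow_of_nonneg (hp : -1 < p) {a b : ℝ} (ha : 0 ≤ a) (hb : 0 ≤ b) :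
    ∫ u in a..b, |u| ^ p = (b ^ (p + 1) - a ^ (p + 1)) / (p + 1) := by
  rw [← integral_rpow (Or.inl hp)]
  refine integral_congr fun u hu => ?_
  rw [abs_of_nonneg ((le_min ha hb).trans hu.1)]

theorem integral_abs_rpow_of_nonpos (hp : -1 < p) {a b : ℝ} (ha : a ≤ 0) (hb : b ≤ 0) :
    ∫ u in a..b, |u| ^ p = ((-a) ^ (p + 1) - (-b) ^ (p + 1)) / (p + 1) := by
  rw [← integral_abs_rpow_of_nonneg hp (neg_nonneg.2 hb) (neg_nonneg.2 ha), ← integral_comp_neg]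
  simp only [abs_neg]

theorem integral_abs_rpow_add_one_le (hp₀ : -1 < p) (hp : p ≤ 0) (a : ℝ) :
    ∫ u in a..a + 1, |u| ^ p ≤ 2 * (1 / 2) ^ (p + 1) / (p + 1) := by
  have hq₀ : 0 < p + 1 := by linarith
  have hq₁ : p + 1 ≤ 1 := by linarith
  have one_le : 1 ≤ 2 * (1 / 2 : ℝ) ^ (p + 1) := by
    simpa [Real.zero_rpow hq₀.ne'] using
      Real.rpow_add_rpow_le_two_mul_rpow_half hq₀.le hq₁ zero_le_one le_rfl
  have sub_le : ∀ x : ℝ, 0 ≤ x → (x + 1) ^ (p + 1) - x ^ (p + 1) ≤ 1 := fun x hx => by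
    linarith [Real.rpow_add_le_add_rpow hx zero_le_one hq₀.le hq₁, Real.one_rpow (p + 1)]
  rcases le_or_gt 0 a with ha | ha
  · rw [integral_abs_rpow_of_nonneg hp₀ ha (by linarith)]
    gcongr
    linarith [sub_le a ha]
  rcases le_or_gt (a + 1) 0 with ha₁ | ha₁
  · rw [integral_abs_rpow_of_nonpos hp₀ ha.le ha₁]
    gcongr
    have h := sub_le (-(a + 1)) (by linarith)
    rw [show -(a + 1) + 1 = -a by ring] at h
    linarith
  · rw [← integral_add_adjacent_intervals (intervalIntegrable_abs_rpow hp₀ a 0)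
      (intervalIntegrable_abs_rpow hp₀ 0 (a + 1)), integral_abs_rpow_of_nonpos hp₀ ha.le le_rfl,
      integral_abs_rpow_of_nonneg hp₀ le_rfl ha₁.le, neg_zero, Real.zero_rpow hq₀.ne', ← add_div]
    gcongr
    simpa using Real.rpow_add_rpow_le_two_mul_rpow_half hq₀.le hq₁ (neg_nonneg.2 ha.le) ha₁.le

/-- For `0 < α ≤ 1/2` and any `s ∈ ℝ`, `∫₀¹ |t + s|^(2α-1) dt ≤ 1/(α 2^(2α))`. -/
theorem integral_abs_rpow_le {α : ℝ} (hα0 : 0 < α) (hα : α ≤ 1 / 2) (s : ℝ) :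
    (∫ t in (0 : ℝ)..1, |t + s| ^ (2 * α - 1)) ≤ 1 / (α * (2 : ℝ) ^ (2 * α)) := by
  have h := integral_abs_rpow_add_one_le (p := 2 * α - 1) (by linarith) (by linarith) s
  rw [integral_comp_add_right (fun u => |u| ^ (2 * α - 1)), zero_add, add_comm]
  convert h using 1
  rw [sub_add_cancel, Real.div_rpow zero_le_one zero_le_two, Real.one_rpow]
  field_simp
end

section
/- Let E be a real inner product space, u, v ∈ E with v ≠ 0, and let α be a real number with 0 < α ≤ 1/2. Then ∫_0^1 ‖u + t·v‖^{2α−1} dt ≤ (1/(α·2^{2α}))·‖v‖^{2α−1}. -/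
/-!
The point `u + s • v`, `s = -⟪u, v⟫ / ‖v‖²`, of the line closest to the origin is orthogonal to `v`,
so Pythagoras gives `‖u + t • v‖ ≥ |t - s| ‖v‖`. As the exponent `p = 2α - 1` is nonpositive, after
moving `s` to its nearest point `c` in `[0, 1]` the integrand is at most `|t - c|^p ‖v‖^p`, whose
integral is `(c^(2α) + (1 - c)^(2α)) / (2α) · ‖v‖^p`; concavity of `x ↦ x^(2α)` bounds the numerator
by its value `2^(1 - 2α)` at `c = 1/2`.
-/

open MeasureTheory Set intervalIntegral Real

section Line

variable {E : Type*} [NormedAddCommGroup E] [InnerProductSpace ℝ E] (u v : E) {t : ℝ}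

theorem abs_sub_mul_norm_le_norm_add_smul :
    |t - -inner ℝ u v / ‖v‖ ^ 2| * ‖v‖ ≤ ‖u + t • v‖ := by
  set s := -inner ℝ u v / ‖v‖ ^ 2
  have horth : inner ℝ (u + s • v) ((t - s) • v) = 0 := by
    rcases eq_or_ne v 0 with rfl | hv
    · simp
    rw [real_inner_smul_right, inner_add_left, real_inner_smul_left, real_inner_self_eq_norm_sq,
      div_mul_cancel₀ _ (by positivity)]
    ring
  have hpyth := norm_add_sq_eq_norm_sq_add_norm_sq_real horth
  rw [show u + s • v + (t - s) • v = u + t • v by rw [sub_smul]; abel] at hpyth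
  rw [← Real.norm_eq_abs, ← norm_smul]
  exact (pow_le_pow_iff_left₀ (norm_nonneg _) (norm_nonneg _) two_ne_zero).mp
    (by nlinarith [sq_nonneg ‖u + s • v‖])

theorem abs_sub_projIcc_mul_norm_le_norm_add_smul {a b : ℝ} (hab : a ≤ b) (ht : t ∈ Icc a b) :
    |t - projIcc a b hab (-inner ℝ u v / ‖v‖ ^ 2)| * ‖v‖ ≤ ‖u + t • v‖ := by
  refine le_trans (mul_le_mul_of_nonneg_right ?_ (norm_nonneg v))
    (abs_sub_mul_norm_le_norm_add_smul u v)
  simpa [projIcc_of_mem _ ht] using abs_projIcc_sub_projIcc hab (c := t) (d := _)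

end Line

section AbsSubRpow

variable {a b c p : ℝ}

theorem eqOn_abs_sub_rpow_Iic : EqOn (fun t => |t - c| ^ p) (fun t => (c - t) ^ p) (Iic c) :=
  fun t ht => by simp only [abs_sub_comm t c, abs_of_nonneg (sub_nonneg.2 (mem_Iic.1 ht))]

theorem eqOn_abs_sub_rpow_Ici : EqOn (fun t => |t - c| ^ p) (fun t => (t - c) ^ p) (Ici c) :=
  fun t ht => by simp only [abs_of_nonneg (sub_nonneg.2 (mem_Ici.1 ht))]

theorem intervalIntegrable_abs_sub_rpow (hp : -1 < p) (hac : a ≤ c) (hcb : c ≤ b) :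
    IntervalIntegrable (fun t => |t - c| ^ p) volume a b := by
  have hleft : IntervalIntegrable (fun t => |t - c| ^ p) volume a c := by
    refine (intervalIntegrable_congr (eqOn_abs_sub_rpow_Iic.mono ?_)).2 ?_
    · exact uIoc_of_le hac ▸ Ioc_subset_Iic_self
    · simpa using (intervalIntegrable_rpow' (a := c - a) (b := 0) hp).comp_sub_left c
  have hright : IntervalIntegrable (fun t => |t - c| ^ p) volume c b := by
    refine (intervalIntegrable_congr (eqOn_abs_sub_rpow_Ici.mono ?_)).2 ?_
    · exact uIoc_of_le hcb ▸ Ioc_subset_Icc_self.trans Icc_subset_Ici_self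
    · simpa using (intervalIntegrable_rpow' (a := 0) (b := b - c) hp).comp_sub_right c
  exact hleft.trans hright

theorem integral_abs_sub_rpow (hp : -1 < p) (hac : a ≤ c) (hcb : c ≤ b) :
    ∫ t in a..b, |t - c| ^ p = ((c - a) ^ (p + 1) + (b - c) ^ (p + 1)) / (p + 1) := by
  rw [← integral_add_adjacent_intervals (intervalIntegrable_abs_sub_rpow hp hac le_rfl)
      (intervalIntegrable_abs_sub_rpow hp le_rfl hcb),
    integral_congr (eqOn_abs_sub_rpow_Iic.mono (uIcc_of_le hac ▸ Icc_subset_Iic_self)),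
    integral_congr (eqOn_abs_sub_rpow_Ici.mono (uIcc_of_le hcb ▸ Icc_subset_Ici_self)),
    integral_comp_sub_left (fun t => t ^ p), integral_comp_sub_right (fun t => t ^ p), sub_self,
    integral_rpow (Or.inl hp), integral_rpow (Or.inl hp), zero_rpow (by linarith), sub_zero,
    sub_zero, add_div]

end AbsSubRpow

theorem rpow_add_one_sub_rpow_le_two_rpow {q c : ℝ} (hq0 : 0 ≤ q) (hq1 : q ≤ 1) (hc0 : 0 ≤ c)
    (hc1 : c ≤ 1) : c ^ q + (1 - c) ^ q ≤ 2 ^ (1 - q) := by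
  have hmid := (concaveOn_rpow hq0 hq1).2 hc0 (sub_nonneg.2 hc1) (by norm_num : (0 : ℝ) ≤ 1 / 2)
    (by norm_num : (0 : ℝ) ≤ 1 / 2) (by norm_num)
  simp only [smul_eq_mul] at hmid
  rw [show 1 / 2 * c + 1 / 2 * (1 - c) = (2 : ℝ)⁻¹ by ring, inv_rpow zero_le_two,
    ← mul_add, one_div, inv_mul_le_iff₀ zero_lt_two] at hmid
  rwa [rpow_sub zero_lt_two, rpow_one, div_eq_mul_inv]

/-- For `0 < α ≤ 1/2`, vectors `u, v` in a real inner product space with `v ≠ 0`,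
`∫₀¹ ‖u + t v‖^(2α-1) dt ≤ (1/(α 2^(2α))) ‖v‖^(2α-1)`. -/
theorem integral_norm_rpow_segment_le {E : Type*} [NormedAddCommGroup E]
    [InnerProductSpace ℝ E] (u v : E) (hv : v ≠ 0)
    {α : ℝ} (hα0 : 0 < α) (hα : α ≤ 1 / 2) :
    (∫ t in (0 : ℝ)..1, ‖u + t • v‖ ^ (2 * α - 1))
      ≤ (1 / (α * (2 : ℝ) ^ (2 * α))) * ‖v‖ ^ (2 * α - 1) := by
  set p := 2 * α - 1
  have hp : -1 < p := by linarith
  set c : ℝ := (projIcc 0 1 zero_le_one (-inner ℝ u v / ‖v‖ ^ 2) : ℝ)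
  have hc : c ∈ Icc (0 : ℝ) 1 := Subtype.prop _
  have hdom : ∀ t ∈ Icc (0 : ℝ) 1, t ≠ c → ‖u + t • v‖ ^ p ≤ |t - c| ^ p * ‖v‖ ^ p := by
    intro t ht htc
    rw [← mul_rpow (abs_nonneg _) (norm_nonneg _)]
    exact rpow_le_rpow_of_nonpos (mul_pos (abs_pos.2 (sub_ne_zero.2 htc)) (norm_pos_iff.2 hv))
      (abs_sub_projIcc_mul_norm_le_norm_add_smul u v zero_le_one ht) (by linarith)
  calc ∫ t in (0 : ℝ)..1, ‖u + t • v‖ ^ p ≤ ∫ t in (0 : ℝ)..1, |t - c| ^ p * ‖v‖ ^ p := by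
        simp only [integral_of_le zero_le_one]
        refine integral_mono_of_nonneg (ae_of_all _ fun t => rpow_nonneg (norm_nonneg _) _)
          ((intervalIntegrable_abs_sub_rpow hp hc.1 hc.2).mul_const _).1 ?_
        filter_upwards [ae_restrict_mem measurableSet_Ioc, ae_restrict_of_ae (volume.ae_ne c)]
          with t ht htc
        exact hdom t (Ioc_subset_Icc_self ht) htc
    _ = (c ^ (p + 1) + (1 - c) ^ (p + 1)) / (p + 1) * ‖v‖ ^ p := by
        rw [intervalIntegral.integral_mul_const, integral_abs_sub_rpow hp hc.1 hc.2, sub_zero]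
    _ ≤ 2 ^ (1 - (p + 1)) / (p + 1) * ‖v‖ ^ p := by
        refine mul_le_mul_of_nonneg_right (div_le_div_of_nonneg_right ?_ (by linarith))
          (rpow_nonneg (norm_nonneg _) _)
        exact rpow_add_one_sub_rpow_le_two_rpow (q := p + 1) (by linarith) (by linarith) hc.1 hc.2
    _ = 1 / (α * 2 ^ (2 * α)) * ‖v‖ ^ p := by
        rw [show 1 - (p + 1) = 1 - 2 * α by ring, show p + 1 = 2 * α by ring,
          rpow_sub zero_lt_two, rpow_one]
        field_simp
end

section
/- Let N be a positive integer and M ∈ ℝ^{N×N} a symmetric positive semidefinite matrix such that I − M is also positive semidefinite. Then ‖(I − M)^{1/2} − I‖_F ≤ trace(M), where (I − M)^{1/2} denotes the principal positive-semidefinite square root of I − M. -/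
open Matrix

/-- Frobenius norm of a real `N × N` matrix. -/
noncomputable def frobNorm {N : ℕ} (A : Matrix (Fin N) (Fin N) ℝ) : ℝ :=
  Real.sqrt (∑ i, ∑ j, (A i j) ^ 2)

section

open scoped ComplexOrder

/-- The positive semidefinite square root of a positive semidefinite matrix
(the definition `Matrix.PosSemidef.sqrt` of the older Mathlib, restored verbatim). -/
noncomputable def Matrix.PosSemidef.sqrt {n : Type*} [Fintype n] [DecidableEq n] {𝕜 : Type*}
    [RCLike 𝕜] {A : Matrix n n 𝕜} (hA : A.PosSemidef) : Matrix n n 𝕜 :=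
  hA.1.eigenvectorUnitary.1 * diagonal ((↑) ∘ (√·) ∘ hA.1.eigenvalues) *
  (star hA.1.eigenvectorUnitary : Matrix n n 𝕜)

end
/-! Diagonalise `1 - M = U diag(μ) Uᵀ`; then `(1 - M)^{1/2} - 1 = U diag(√μᵢ - 1) Uᵀ` has squared
Frobenius norm `∑ (√μᵢ - 1)²`. As `M ⪰ 0` forces `μᵢ ≤ 1`, and `|√μ - 1| ≤ |μ - 1|` because
`μ - 1 = (√μ - 1)(√μ + 1)`, this is at most `∑ (1 - μᵢ)² ≤ (∑ (1 - μᵢ))² = (trace M)²`. -/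

theorem abs_sqrt_sub_one_le_abs_sub_one {x : ℝ} (hx : 0 ≤ x) : |√x - 1| ≤ |x - 1| := by
  have hfactor : x - 1 = (√x - 1) * (√x + 1) := by linear_combination (Real.sq_sqrt hx).symm
  have hone : 1 ≤ |√x + 1| := by
    rw [abs_of_nonneg (by positivity)]
    linarith [Real.sqrt_nonneg x]
  rw [hfactor, abs_mul]
  exact le_mul_of_one_le_right (abs_nonneg _) hone

namespace Matrix

variable {n : Type*} [Fintype n] [DecidableEq n]

theorem mul_diagonal_mul_star_sub_one_of_mem_unitaryGroup {R : Type*} [CommRing R] [StarRing R]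
    {U : Matrix n n R} (hU : U ∈ unitaryGroup n R) (d : n → R) :
    U * diagonal d * star U - 1 = U * diagonal (fun i => d i - 1) * star U := by
  rw [← diagonal_sub, diagonal_one, mul_sub, sub_mul, mul_one, Unitary.mul_star_self_of_mem hU]

variable {𝕜 : Type*} [RCLike 𝕜]

open scoped ComplexOrder

theorem IsHermitian.eigenvalues_le_one {A : Matrix n n 𝕜} (hA : A.IsHermitian)
    (h : (1 - A).PosSemidef) (i : n) : hA.eigenvalues i ≤ 1 := by
  have hv : star ⇑(hA.eigenvectorBasis i) ⬝ᵥ ⇑(hA.eigenvectorBasis i) = 1 := by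
    rw [dotProduct_comm, ← EuclideanSpace.inner_eq_star_dotProduct, inner_self_eq_norm_sq_to_K,
      hA.eigenvectorBasis.orthonormal.1 i]
    simp
  have := h.dotProduct_mulVec_nonneg (hA.eigenvectorBasis i)
  rw [sub_mulVec, one_mulVec, hA.mulVec_eigenvectorBasis, dotProduct_sub, dotProduct_smul, hv,
    RCLike.real_smul_eq_coe_mul, mul_one, sub_nonneg] at this
  exact_mod_cast this

theorem PosSemidef.sqrt_sub_one {A : Matrix n n 𝕜} (hA : A.PosSemidef) :
    hA.sqrt - 1 = hA.1.eigenvectorUnitary.1 *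
      diagonal ((↑) ∘ (fun x => √x - 1) ∘ hA.1.eigenvalues) * star hA.1.eigenvectorUnitary.1 := by
  rw [PosSemidef.sqrt, mul_diagonal_mul_star_sub_one_of_mem_unitaryGroup hA.1.eigenvectorUnitary.2]
  congr
  ext i
  simp

end Matrix

theorem frobNorm_eq_sqrt_trace {N : ℕ} (A : Matrix (Fin N) (Fin N) ℝ) :
    frobNorm A = √(Aᵀ * A).trace := by
  simp only [frobNorm, trace, diag, mul_apply, transpose_apply, sq]
  rw [Finset.sum_comm]

theorem frobNorm_mul_diagonal_mul_star_of_mem_unitaryGroup {N : ℕ} {U : Matrix (Fin N) (Fin N) ℝ}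
    (hU : U ∈ unitaryGroup (Fin N) ℝ) (d : Fin N → ℝ) :
    frobNorm (U * diagonal d * star U) = √(∑ i, d i ^ 2) := by
  rw [frobNorm_eq_sqrt_trace]
  congr 1
  calc ((U * diagonal d * star U)ᵀ * (U * diagonal d * star U)).trace
      = (U * (diagonal d * diagonal d) * star U).trace := by
        have hsymm : (U * diagonal d * star U)ᵀ = U * diagonal d * star U := by
          simp [star_eq_conjTranspose, transpose_mul, mul_assoc]
        rw [hsymm]
        simp only [mul_assoc]
        rw [← mul_assoc (star U) U, Unitary.star_mul_self_of_mem hU, one_mul]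
    _ = ∑ i, d i ^ 2 := by
        rw [trace_mul_cycle, Unitary.star_mul_self_of_mem hU, one_mul, diagonal_mul_diagonal,
          trace_diagonal]
        simp [sq]

theorem frobNorm_sqrt_sub_one_le_trace_general {N : ℕ}
    (M : Matrix (Fin N) (Fin N) ℝ) (hM : M.PosSemidef)
    (hIM : ((1 : Matrix (Fin N) (Fin N) ℝ) - M).PosSemidef) :
    frobNorm (hIM.sqrt - 1) ≤ M.trace := by
  set μ := hIM.1.eigenvalues
  have hμ_le_one : ∀ i, μ i ≤ 1 := hIM.1.eigenvalues_le_one (by rwa [sub_sub_cancel])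
  have htrace : M.trace = ∑ i, (1 - μ i) := by
    have := hIM.1.trace_eq_sum_eigenvalues
    rw [trace_sub, trace_one] at this
    simp only [Fintype.card_fin, RCLike.ofReal_real_eq_id, id] at this
    rw [Finset.sum_sub_distrib, ← this]
    simp
  rw [hIM.sqrt_sub_one,
    frobNorm_mul_diagonal_mul_star_of_mem_unitaryGroup hIM.1.eigenvectorUnitary.2, htrace,
    Real.sqrt_le_left (Finset.sum_nonneg fun i _ => sub_nonneg.2 (hμ_le_one i))]
  calc ∑ i, (√(μ i) - 1) ^ 2 ≤ ∑ i, (1 - μ i) ^ 2 := by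
        refine Finset.sum_le_sum fun i _ => sq_le_sq.2 ?_
        rw [abs_sub_comm 1]
        exact abs_sqrt_sub_one_le_abs_sub_one (hIM.eigenvalues_nonneg i)
    _ ≤ (∑ i, (1 - μ i)) ^ 2 :=
        Finset.sum_sq_le_sq_sum_of_nonneg fun i _ => sub_nonneg.2 (hμ_le_one i)

/-- If `M` is positive semidefinite and `I − M` is positive semidefinite, then
`‖(I − M)^{1/2} − I‖_F ≤ trace M`. -/
theorem frobNorm_sqrt_sub_one_le_trace {N : ℕ} (hN : 0 < N)
    (M : Matrix (Fin N) (Fin N) ℝ) (hM : M.PosSemidef)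
    (hIM : ((1 : Matrix (Fin N) (Fin N) ℝ) - M).PosSemidef) :
    frobNorm (hIM.sqrt - 1) ≤ M.trace :=
  frobNorm_sqrt_sub_one_le_trace_general M hM hIM
end

section
/- Let H be a real inner product space, N a positive integer, and Φ, Ψ : Fin N → H orthonormal tuples. Let U₀ ∈ ℝ^{N×N} be an orthogonal matrix such that Σ_i ‖(Ψ·U₀) i − Φ i‖² ≤ Σ_i ‖(Ψ·U) i − Φ i‖² for every orthogonal matrix U. Then ‖U₀ − I‖_F ≤ 2 (Σ_i ‖Ψ i − Φ i‖²)^{1/2}. -/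
open Matrix
open scoped RealInnerProductSpace

/-- Action of a matrix on a tuple of vectors: `(Φ·A) i = ∑ j, A j i • Φ j`. -/
noncomputable def tupleMul {H : Type*} [NormedAddCommGroup H] [InnerProductSpace ℝ H]
    {N : ℕ} (Φ : Fin N → H) (A : Matrix (Fin N) (Fin N) ℝ) : Fin N → H :=
  fun i => ∑ j, A j i • Φ j

/-!
Let `F = Ψ·U₀ − Φ` and `G = Ψ − Φ`, viewed in `ℓ²(Fin N; H)`. Comparing `U₀` with the
competitor `U = 1` gives `‖F‖ ≤ ‖G‖`. Since `Ψ` is orthonormal, `A ↦ Ψ·A` is an isometry for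
the Frobenius norm, so `‖U₀ − 1‖_F = ‖Ψ·U₀ − Ψ‖ = ‖F − G‖ ≤ ‖F‖ + ‖G‖ ≤ 2‖G‖`.
-/

section TupleMul

variable {H : Type*} [NormedAddCommGroup H] [InnerProductSpace ℝ H] {N : ℕ}

@[simp]
lemma tupleMul_one (Φ : Fin N → H) : tupleMul Φ 1 = Φ := by
  ext i
  simp [tupleMul, Matrix.one_apply]

lemma tupleMul_sub (Φ : Fin N → H) (A B : Matrix (Fin N) (Fin N) ℝ) :
    tupleMul Φ (A - B) = tupleMul Φ A - tupleMul Φ B := by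
  ext i
  simp [tupleMul, sub_smul, Finset.sum_sub_distrib]

lemma Orthonormal.norm_sq_tupleMul_apply {Ψ : Fin N → H} (hΨ : Orthonormal ℝ Ψ)
    (A : Matrix (Fin N) (Fin N) ℝ) (i : Fin N) :
    ‖tupleMul Ψ A i‖ ^ 2 = ∑ j, A j i ^ 2 := by
  rw [← real_inner_self_eq_norm_sq, tupleMul, hΨ.inner_sum]
  simp [sq]

lemma Orthonormal.frobNorm_eq_norm_tupleMul {Ψ : Fin N → H} (hΨ : Orthonormal ℝ Ψ)
    (A : Matrix (Fin N) (Fin N) ℝ) :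
    frobNorm A = ‖WithLp.toLp 2 (tupleMul Ψ A)‖ := by
  rw [PiLp.norm_eq_of_L2, frobNorm, Finset.sum_comm]
  simp only [hΨ.norm_sq_tupleMul_apply]

end TupleMul

theorem frobNorm_optimal_rotation_sub_one_le_general {H : Type*} [NormedAddCommGroup H]
    [InnerProductSpace ℝ H] {N : ℕ} (Φ Ψ : Fin N → H)
    (hΨ : ∀ i j, ⟪Ψ i, Ψ j⟫ = if i = j then 1 else 0)
    (U₀ : Matrix (Fin N) (Fin N) ℝ)
    (hopt : ∀ U : Matrix (Fin N) (Fin N) ℝ, Uᵀ * U = 1 →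
      (∑ i, ‖tupleMul Ψ U₀ i - Φ i‖ ^ 2) ≤ ∑ i, ‖tupleMul Ψ U i - Φ i‖ ^ 2) :
    frobNorm (U₀ - 1) ≤ 2 * Real.sqrt (∑ i, ‖Ψ i - Φ i‖ ^ 2) := by
  set F := WithLp.toLp 2 (tupleMul Ψ U₀ - Φ)
  set G := WithLp.toLp 2 (Ψ - Φ)
  have hG : ‖G‖ = Real.sqrt (∑ i, ‖Ψ i - Φ i‖ ^ 2) := PiLp.norm_eq_of_L2 G
  have hFG : ‖F‖ ≤ ‖G‖ := by
    rw [PiLp.norm_eq_of_L2, PiLp.norm_eq_of_L2]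
    exact Real.sqrt_le_sqrt (by simpa [F, G] using hopt 1 (by simp))
  calc frobNorm (U₀ - 1) = ‖F - G‖ := by
        rw [(orthonormal_iff_ite.mpr hΨ).frobNorm_eq_norm_tupleMul, tupleMul_sub, tupleMul_one,
          ← WithLp.toLp_sub, sub_sub_sub_cancel_right]
    _ ≤ ‖F‖ + ‖G‖ := norm_sub_le F G
    _ ≤ 2 * Real.sqrt (∑ i, ‖Ψ i - Φ i‖ ^ 2) := by linarith

/-- If `U₀` optimally aligns the orthonormal tuple `Ψ` with the orthonormal tuple `Φ`,
then `‖U₀ − I‖_F ≤ 2 (∑ ‖Ψ i − Φ i‖²)^{1/2}`. -/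
theorem frobNorm_optimal_rotation_sub_one_le {H : Type*} [NormedAddCommGroup H]
    [InnerProductSpace ℝ H] {N : ℕ} (hN : 0 < N) (Φ Ψ : Fin N → H)
    (hΦ : ∀ i j, ⟪Φ i, Φ j⟫ = if i = j then 1 else 0)
    (hΨ : ∀ i j, ⟪Ψ i, Ψ j⟫ = if i = j then 1 else 0)
    (U₀ : Matrix (Fin N) (Fin N) ℝ) (hU₀ : U₀ᵀ * U₀ = 1)
    (hopt : ∀ U : Matrix (Fin N) (Fin N) ℝ, Uᵀ * U = 1 →
      (∑ i, ‖tupleMul Ψ U₀ i - Φ i‖ ^ 2) ≤ ∑ i, ‖tupleMul Ψ U i - Φ i‖ ^ 2) :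
    frobNorm (U₀ - 1) ≤ 2 * Real.sqrt (∑ i, ‖Ψ i - Φ i‖ ^ 2) :=
  frobNorm_optimal_rotation_sub_one_le_general Φ Ψ hΨ U₀ hopt
end

section
/- Let X and Y be real Hilbert spaces and a : X × Y → ℝ a continuous bilinear form. Assume: (i) there exists β > 0 such that for every x ∈ X, sup_{y ∈ Y, ‖y‖ ≤ 1} a(x, y) ≥ β‖x‖ (inf-sup condition); and (ii) for every nonzero y ∈ Y there exists x ∈ X with a(x, y) ≠ 0. Then for every continuous linear functional f : Y → ℝ there exists a unique x ∈ X such that a(x, y) = f(y) for all y ∈ Y, and this solution satisfies ‖x‖ ≤ β⁻¹ ‖f‖. -/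
/-!
The inf-sup condition says `β ‖x‖ ≤ ‖a x‖`, so `x ↦ a(x, ·)` is antilipschitz from the Banach
space `X` into the dual of `Y`: it is injective with closed range. Through the Riesz isometry
the range becomes a subspace of `Y` whose orthogonal complement is trivial by nondegeneracy,
so the range is dense and therefore all of the dual. Surjectivity gives existence, injectivity
uniqueness, and the lower bound applied to the solution is the stability estimate.
-/

open InnerProductSpace

theorem AntilipschitzWith.surjective_of_denseRange {α β : Type*} [PseudoEMetricSpace α]
    [EMetricSpace β] [CompleteSpace α] {K : NNReal} {f : α → β} (hf : AntilipschitzWith K f)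
    (hfc : UniformContinuous f) (hd : DenseRange f) : Function.Surjective f :=
  Set.range_eq_univ.1 <| (hf.isClosed_range hfc).closure_eq.symm.trans hd.closure_range

namespace ContinuousLinearMap

theorem iSup_unitClosedBall_le_opNorm {E : Type*} [SeminormedAddCommGroup E] [NormedSpace ℝ E]
    (φ : StrongDual ℝ E) : ⨆ y ∈ {y : E | ‖y‖ ≤ 1}, φ y ≤ ‖φ‖ :=
  Real.iSup_le (fun y => Real.iSup_le (fun hy => (le_abs_self _).trans (φ.unit_le_opNorm y hy))
    (norm_nonneg _)) (norm_nonneg _)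

theorem denseRange_of_forall_ne_zero_exists_apply_ne_zero {X Y : Type*} [NormedAddCommGroup X]
    [NormedSpace ℝ X] [NormedAddCommGroup Y] [InnerProductSpace ℝ Y] [CompleteSpace Y]
    {a : X →L[ℝ] StrongDual ℝ Y} (hnondeg : ∀ y : Y, y ≠ 0 → ∃ x : X, a x y ≠ 0) :
    DenseRange a := by
  let K : Submodule ℝ Y :=
    (LinearMap.range (a : X →ₗ[ℝ] StrongDual ℝ Y)).map (toDual ℝ Y).symm.toLinearEquiv.toLinearMap
  have hK : Kᗮ = ⊥ := by
    refine (Submodule.eq_bot_iff _).2 fun y hy => ?_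
    by_contra hy0
    obtain ⟨x, hx⟩ := hnondeg y hy0
    refine hx ?_
    rw [← (Submodule.mem_orthogonal _ _).1 hy _ ⟨a x, LinearMap.mem_range_self _ x, rfl⟩]
    exact toDual_symm_apply.symm
  have hKdense : Dense (K : Set Y) :=
    Submodule.dense_iff_topologicalClosure_eq_top.2 (Submodule.topologicalClosure_eq_top_iff.2 hK)
  rw [Submodule.map_coe, LinearMap.coe_range] at hKdense
  exact (toDual ℝ Y).symm.toHomeomorph.isDenseEmbedding.dense_image.1 hKdense

end ContinuousLinearMap

/-- Banach–Nečas–Babuška: a continuous bilinear form on real Hilbert spaces satisfying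
the inf-sup condition with constant `β > 0` and nondegeneracy in the second variable
yields, for each continuous linear functional `f`, a unique solution `x` of
`a(x, ·) = f`, and this solution satisfies `‖x‖ ≤ β⁻¹ ‖f‖`. -/
theorem banach_necas_babuska {X Y : Type*}
    [NormedAddCommGroup X] [InnerProductSpace ℝ X] [CompleteSpace X]
    [NormedAddCommGroup Y] [InnerProductSpace ℝ Y] [CompleteSpace Y]
    (a : X →L[ℝ] Y →L[ℝ] ℝ)
    (β : ℝ) (hβ : 0 < β)
    (hinfsup : ∀ x : X, β * ‖x‖ ≤ ⨆ y ∈ {y : Y | ‖y‖ ≤ 1}, a x y)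
    (hnondeg : ∀ y : Y, y ≠ 0 → ∃ x : X, a x y ≠ 0) :
    ∀ f : Y →L[ℝ] ℝ, ∃ x : X, (∀ y : Y, a x y = f y) ∧ ‖x‖ ≤ β⁻¹ * ‖f‖ ∧
      ∀ x' : X, (∀ y : Y, a x' y = f y) → x' = x := by
  have hbound : ∀ x, ‖x‖ ≤ β⁻¹ * ‖a x‖ := fun x =>
    (le_inv_mul_iff₀ hβ).2 ((hinfsup x).trans (a x).iSup_unitClosedBall_le_opNorm)
  have hanti : AntilipschitzWith ⟨β⁻¹, (inv_pos.2 hβ).le⟩ a := a.antilipschitz_of_bound hbound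
  have hsurj : Function.Surjective a :=
    hanti.surjective_of_denseRange a.uniformContinuous
      (ContinuousLinearMap.denseRange_of_forall_ne_zero_exists_apply_ne_zero hnondeg)
  intro f
  obtain ⟨x, rfl⟩ := hsurj f
  exact ⟨x, fun _ => rfl, hbound x, fun x' hx' => hanti.injective (ContinuousLinearMap.ext hx')⟩
end

section
/- Let H be a real inner product space, N a positive integer, Φ, Ψ : Fin N → H orthonormal tuples, and Λ = (Λ_{ij}) ∈ ℝ^{N×N} a symmetric matrix. Then | Σ_{i,j} Λ_{ij} ⟨Φ j, Ψ i − Φ i⟩ | ≤ (‖Λ‖_F / 2) · Σ_i ‖Ψ i − Φ i‖². -/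
/-! Writing `dᵢ = Ψᵢ - Φᵢ`, equality of the Gram matrices of `Φ` and `Ψ` gives
`⟪Φⱼ, dᵢ⟫ + ⟪Φᵢ, dⱼ⟫ = -⟪dᵢ, dⱼ⟫`, so symmetrizing in `Λ` turns the first-order term into
`-½ ∑ Λᵢⱼ ⟪dᵢ, dⱼ⟫`, which is quadratic in `d`. Bounding `|⟪dᵢ, dⱼ⟫| ≤ ‖dᵢ‖ ‖dⱼ‖` and applying
Cauchy–Schwarz over the pairs `(i, j)` gives `‖Λ‖_F ∑ ‖dᵢ‖²`. -/

open Matrix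
open scoped RealInnerProductSpace

open Finset

theorem Matrix.IsSymm.sum_sum_mul_eq_half_sum_sum_mul_add_swap {ι : Type*} [Fintype ι]
    {A : Matrix ι ι ℝ} (hA : A.IsSymm) (f : ι → ι → ℝ) :
    ∑ i, ∑ j, A i j * f i j = 1 / 2 * ∑ i, ∑ j, A i j * (f i j + f j i) := by
  have hswap : ∑ i, ∑ j, A i j * f j i = ∑ i, ∑ j, A i j * f i j := by
    rw [sum_comm]
    simp only [hA.apply]
  simp only [mul_add, sum_add_distrib, hswap]
  ring

section

variable {H : Type*} [NormedAddCommGroup H] [InnerProductSpace ℝ H]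

theorem inner_sub_add_inner_sub_of_inner_eq {a b c e : H} (h : ⟪c, e⟫ = ⟪a, b⟫) :
    ⟪b, c - a⟫ + ⟪a, e - b⟫ = -⟪c - a, e - b⟫ := by
  simp only [inner_sub_left, inner_sub_right]
  linarith [real_inner_comm b c, real_inner_comm b a]

theorem abs_sum_sum_mul_inner_le {ι : Type*} [Fintype ι] (A : ι → ι → ℝ) (d : ι → H) :
    |∑ i, ∑ j, A i j * ⟪d i, d j⟫| ≤ √(∑ i, ∑ j, A i j ^ 2) * ∑ i, ‖d i‖ ^ 2 :=
  calc |∑ i, ∑ j, A i j * ⟪d i, d j⟫|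
      ≤ ∑ i, ∑ j, |A i j| * (‖d i‖ * ‖d j‖) := by
        refine (abs_sum_le_sum_abs _ _).trans <| sum_le_sum fun i _ ↦
          (abs_sum_le_sum_abs _ _).trans <| sum_le_sum fun j _ ↦ ?_
        rw [abs_mul]
        gcongr
        exact abs_real_inner_le_norm _ _
    _ = ∑ p : ι × ι, |A p.1 p.2| * (‖d p.1‖ * ‖d p.2‖) := (Fintype.sum_prod_type' _).symm
    _ ≤ √(∑ p : ι × ι, |A p.1 p.2| ^ 2) * √(∑ p : ι × ι, (‖d p.1‖ * ‖d p.2‖) ^ 2) :=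
        Real.sum_mul_le_sqrt_mul_sqrt _ _ _
    _ = √(∑ i, ∑ j, A i j ^ 2) * ∑ i, ‖d i‖ ^ 2 := by
        simp only [Fintype.sum_prod_type, sq_abs, mul_pow, ← sum_mul_sum, ← sq]
        rw [Real.sqrt_sq (by positivity)]

theorem sum_sum_mul_inner_sub_eq_neg_half {ι : Type*} [Fintype ι] {A : Matrix ι ι ℝ}
    (hA : A.IsSymm) {Φ Ψ : ι → H} (hgram : ∀ i j, ⟪Ψ i, Ψ j⟫ = ⟪Φ i, Φ j⟫) :
    ∑ i, ∑ j, A i j * ⟪Φ j, Ψ i - Φ i⟫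
      = -(1 / 2 * ∑ i, ∑ j, A i j * ⟪Ψ i - Φ i, Ψ j - Φ j⟫) := by
  rw [hA.sum_sum_mul_eq_half_sum_sum_mul_add_swap]
  simp only [inner_sub_add_inner_sub_of_inner_eq (hgram _ _), mul_neg, sum_neg_distrib]

end

theorem first_order_term_quadratic_bound_general {H : Type*} [NormedAddCommGroup H]
    [InnerProductSpace ℝ H] {N : ℕ} (Φ Ψ : Fin N → H)
    (hΦ : ∀ i j, ⟪Φ i, Φ j⟫ = if i = j then 1 else 0)
    (hΨ : ∀ i j, ⟪Ψ i, Ψ j⟫ = if i = j then 1 else 0)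
    (Λ : Matrix (Fin N) (Fin N) ℝ) (hΛ : Λᵀ = Λ) :
    |∑ i, ∑ j, Λ i j * ⟪Φ j, Ψ i - Φ i⟫|
      ≤ (frobNorm Λ / 2) * ∑ i, ‖Ψ i - Φ i‖ ^ 2 := by
  have hgram : ∀ i j, ⟪Ψ i, Ψ j⟫ = ⟪Φ i, Φ j⟫ := fun i j ↦ by rw [hΦ, hΨ]
  calc |∑ i, ∑ j, Λ i j * ⟪Φ j, Ψ i - Φ i⟫|
      = 1 / 2 * |∑ i, ∑ j, Λ i j * ⟪Ψ i - Φ i, Ψ j - Φ j⟫| := by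
        rw [sum_sum_mul_inner_sub_eq_neg_half hΛ hgram, abs_neg, abs_mul, abs_of_pos one_half_pos]
    _ ≤ 1 / 2 * (frobNorm Λ * ∑ i, ‖Ψ i - Φ i‖ ^ 2) := by
        gcongr
        exact abs_sum_sum_mul_inner_le Λ _
    _ = (frobNorm Λ / 2) * ∑ i, ‖Ψ i - Φ i‖ ^ 2 := by ring

/-- Quadratic bound of the first-order term: for orthonormal tuples `Φ, Ψ` and a
symmetric matrix `Λ`, `|∑_{i,j} Λ_{ij} ⟨Φ j, Ψ i − Φ i⟩| ≤ (‖Λ‖_F/2) ∑ i ‖Ψ i − Φ i‖²`. -/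
theorem first_order_term_quadratic_bound {H : Type*} [NormedAddCommGroup H]
    [InnerProductSpace ℝ H] {N : ℕ} (hN : 0 < N) (Φ Ψ : Fin N → H)
    (hΦ : ∀ i j, ⟪Φ i, Φ j⟫ = if i = j then 1 else 0)
    (hΨ : ∀ i j, ⟪Ψ i, Ψ j⟫ = if i = j then 1 else 0)
    (Λ : Matrix (Fin N) (Fin N) ℝ) (hΛ : Λᵀ = Λ) :
    |∑ i, ∑ j, Λ i j * ⟪Φ j, Ψ i - Φ i⟫|
      ≤ (frobNorm Λ / 2) * ∑ i, ‖Ψ i - Φ i‖ ^ 2 :=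
  first_order_term_quadratic_bound_general Φ Ψ hΦ hΨ Λ hΛ
end
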